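/- Let K_ε(x) = -(|x|² + ε)^{-3} on O² ≅ ℝ¹⁶ for ε > 0. Then the octonionic Hessian of K_ε has entries conj∂_α ∂_β K_ε = -48 (|x|²+ε)^{-5} x_α conj(x_β) + 48 δ_{αβ} (|x|²+ε)^{-4}, and its determinant equals det(Hess_O(K_ε)) = 48² ε / (|x|²+ε)⁹ > 0. -/

import Mathlib

noncomputable section

open Quaternion

/-- The octonions, as the Cayley–Dickson double of the quaternions. -/
@[ext] structure Octonion : Type where
  q1 : Quaternion ℝ
  q2 : Quaternion ℝ

namespace Octonion

def equivProd : Octonion ≃ Quaternion ℝ × Quaternion ℝ :=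
  ⟨fun x => (x.q1, x.q2), fun p => ⟨p.1, p.2⟩, fun _ => rfl, fun _ => rfl⟩

instance : AddCommGroup Octonion := equivProd.addCommGroup
instance : Module ℝ Octonion := equivProd.module ℝ
instance : TopologicalSpace Octonion :=
  TopologicalSpace.induced equivProd inferInstance

instance : One Octonion := ⟨⟨1, 0⟩⟩

/-- Cayley–Dickson multiplication: `(a,b)(c,d) = (ac - d̄b, da + b c̄)`. -/
instance : Mul Octonion :=
  ⟨fun x y => ⟨x.q1 * y.q1 - star y.q2 * x.q2, y.q2 * x.q1 + x.q2 * star y.q1⟩⟩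

/-- Octonionic conjugation. -/
def conj (x : Octonion) : Octonion := ⟨star x.q1, -x.q2⟩

/-- The real part of an octonion. -/
def re (x : Octonion) : ℝ := x.q1.re

/-- The imaginary part of an octonion. -/
def im (x : Octonion) : Octonion := (2⁻¹ : ℝ) • (x - conj x)

/-- The squared norm `|x|²` of an octonion. -/
def normSq (x : Octonion) : ℝ := Quaternion.normSq x.q1 + Quaternion.normSq x.q2

/-- The inverse of an octonion (junk value `0` at `0`). -/
def inv (x : Octonion) : Octonion := (normSq x)⁻¹ • conj x

end Octonion

namespace Octonion

/-- The octonion with coordinates `v : Fin 8 → ℝ` in the standard basis `e₀,…,e₇`. -/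
def octOf (v : Fin 8 → ℝ) : Octonion := ⟨⟨v 0, v 1, v 2, v 3⟩, ⟨v 4, v 5, v 6, v 7⟩⟩

/-- The standard basis `e_p`, `p = 0,…,7`, of the octonions, with `e₀ = 1`. -/
def basisE (p : Fin 8) : Octonion := octOf (Pi.single p 1)

end Octonion

/-- Points of `O²` as real coordinates `x = (x_{αp})`, `α ∈ {1,2}`, `p ∈ {0,…,7}`. -/
abbrev OPt : Type := Fin 2 → Fin 8 → ℝ

/-- The octonionic coordinate `x_α` of a point of `O² ≅ ℝ¹⁶`. -/
def octPt (x : OPt) (α : Fin 2) : Octonion := Octonion.octOf (x α)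

/-- The squared norm `|x|²` of a point of `O² ≅ ℝ¹⁶`. -/
def ptNormSq (x : OPt) : ℝ := ∑ α : Fin 2, ∑ p : Fin 8, (x α p) ^ 2

/-- The partial derivative `∂u/∂x_{αp}`. -/
def pd (α : Fin 2) (p : Fin 8) (u : OPt → ℝ) (x : OPt) : ℝ :=
  fderiv ℝ u x (Pi.single α (Pi.single p 1))

/-- The Dirac operator `conj∂_α u = Σ_p e_p ∂u/∂x_{αp}` (for real-valued `u` this is the
octonion whose coordinates are the partial derivatives). -/
def diracD (α : Fin 2) (u : OPt → ℝ) (x : OPt) : Octonion :=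
  Octonion.octOf fun p => pd α p u x

/-- The entry `conj∂_α ∂_β u = Σ_{q,p} (∂²u/∂x_{αq}∂x_{βp}) e_q conj(e_p)` of the octonionic
Hessian of a scalar function `u`. -/
def octHess (u : OPt → ℝ) (α β : Fin 2) (x : OPt) : Octonion :=
  ∑ q : Fin 8, ∑ p : Fin 8,
    (pd α q (fun y => pd β p u y) x) • (Octonion.basisE q * Octonion.conj (Octonion.basisE p))

/-- The determinant of an octonionic Hermitian `2×2` matrix given by its entries:
`det A = a₁₁ a₂₂ - |a₁₂|²` (the diagonal entries being real). -/
def detEntries (A : Fin 2 → Fin 2 → Octonion) : ℝ :=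
  Octonion.re (A 0 0) * Octonion.re (A 1 1) - Octonion.normSq (A 0 1)


/-! `K_ε = f(|x|²)` with `f(t) = -(t+ε)⁻³` is radial, so by the chain rule
`∂²K_ε/∂x_{αq}∂x_{βp} = 4 f''(|x|²) x_{αq} x_{βp} + 2 δ_{αβ} δ_{qp} f'(|x|²)`.
Summed against `e_q conj(e_p)`, the first term is `4 f'' x_α conj(x_β)` and the second, since
`e_q conj(e_q) = 1`, is `16 δ_{αβ} f'`. For a Hermitian matrix `a x_α conj(x_β) + b δ_{αβ}` the
multiplicativity of the octonionic norm gives `det = b (a |x|² + b)`, which for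
`a = -48 (|x|²+ε)⁻⁵`, `b = 48 (|x|²+ε)⁻⁴` is `48² ε (|x|²+ε)⁻⁹`. -/

namespace Octonion

@[simp] lemma add_q1 (x y : Octonion) : (x + y).q1 = x.q1 + y.q1 := rfl
@[simp] lemma add_q2 (x y : Octonion) : (x + y).q2 = x.q2 + y.q2 := rfl
@[simp] lemma smul_q1 (c : ℝ) (x : Octonion) : (c • x).q1 = c • x.q1 := rfl
@[simp] lemma smul_q2 (c : ℝ) (x : Octonion) : (c • x).q2 = c • x.q2 := rfl
@[simp] lemma zero_q1 : (0 : Octonion).q1 = 0 := rfl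
@[simp] lemma zero_q2 : (0 : Octonion).q2 = 0 := rfl
@[simp] lemma one_q1 : (1 : Octonion).q1 = 1 := rfl
@[simp] lemma one_q2 : (1 : Octonion).q2 = 0 := rfl
@[simp] lemma mul_q1 (x y : Octonion) : (x * y).q1 = x.q1 * y.q1 - star y.q2 * x.q2 := rfl
@[simp] lemma mul_q2 (x y : Octonion) : (x * y).q2 = y.q2 * x.q1 + x.q2 * star y.q1 := rfl
@[simp] lemma conj_q1 (x : Octonion) : (conj x).q1 = star x.q1 := rfl
@[simp] lemma conj_q2 (x : Octonion) : (conj x).q2 = -x.q2 := rfl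

@[simp] lemma re_add (x y : Octonion) : re (x + y) = re x + re y := rfl
@[simp] lemma re_smul (c : ℝ) (x : Octonion) : re (c • x) = c * re x := rfl
@[simp] lemma re_one : re (1 : Octonion) = 1 := rfl

local instance : NonUnitalNonAssocRing Octonion where
  left_distrib x y z := by
    ext : 1 <;> simp only [mul_q1, mul_q2, add_q1, add_q2, mul_add, add_mul, star_add] <;> abel
  right_distrib x y z := by
    ext : 1 <;> simp only [mul_q1, mul_q2, add_q1, add_q2, mul_add, add_mul] <;> abel
  zero_mul x := by ext <;> simp
  mul_zero x := by ext <;> simp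

local instance : IsScalarTower ℝ Octonion Octonion where
  smul_assoc c x y := by ext <;> simp [smul_sub, smul_add]

local instance : SMulCommClass ℝ Octonion Octonion where
  smul_comm c x y := by ext <;> simp [Quaternion.star_smul, smul_sub, smul_add]

-- Degen's eight-square identity.
lemma normSq_mul (x y : Octonion) : normSq (x * y) = normSq x * normSq y := by
  simp only [normSq, mul_q1, mul_q2, normSq_def', re_sub, re_mul, re_star, imI_star, imJ_star,
    imK_star, imI_sub, imI_mul, imJ_sub, imJ_mul, imK_sub, imK_mul, Quaternion.re_add, imI_add,
    imJ_add, imK_add, neg_mul, mul_neg, sub_neg_eq_add]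
  ring

lemma normSq_conj (x : Octonion) : normSq (conj x) = normSq x := by
  simp [normSq]

lemma normSq_smul (c : ℝ) (x : Octonion) : normSq (c • x) = c ^ 2 * normSq x := by
  simp only [normSq, smul_q1, smul_q2, Quaternion.normSq_smul]
  ring

lemma mul_conj_self (x : Octonion) : x * conj x = normSq x • 1 := by
  ext <;> simp [normSq, Quaternion.normSq_def'] <;> ring

lemma re_mul_conj_self (x : Octonion) : re (x * conj x) = normSq x := by
  simp [mul_conj_self]

lemma octOf_eq_sum (v : Fin 8 → ℝ) : octOf v = ∑ p, v p • basisE p := by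
  ext <;> simp [Fin.sum_univ_eight, Quaternion.re_smul] <;> simp [octOf, basisE]

lemma conj_octOf_eq_sum (v : Fin 8 → ℝ) : conj (octOf v) = ∑ p, v p • conj (basisE p) := by
  ext <;> simp [Fin.sum_univ_eight, Quaternion.re_smul] <;> simp [octOf, basisE]

lemma normSq_octOf (v : Fin 8 → ℝ) : normSq (octOf v) = ∑ p, v p ^ 2 := by
  rw [normSq, octOf, Quaternion.normSq_def', Quaternion.normSq_def', Fin.sum_univ_eight]
  ring

lemma basisE_mul_conj_self (q : Fin 8) : basisE q * conj (basisE q) = 1 := by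
  rw [mul_conj_self, basisE, normSq_octOf]
  simp [Pi.single_apply]

lemma octOf_mul_conj_octOf (a b : Fin 8 → ℝ) :
    octOf a * conj (octOf b) = ∑ q, ∑ p, (a q * b p) • (basisE q * conj (basisE p)) := by
  simp_rw [octOf_eq_sum a, conj_octOf_eq_sum, Finset.sum_mul, Finset.mul_sum, smul_mul_assoc,
    mul_smul_comm, smul_smul]

lemma detEntries_smul_mul_conj_add (a b : ℝ) (z : Fin 2 → Octonion) :
    detEntries (fun α β => a • (z α * conj (z β)) + (if α = β then b else 0) • 1) =
      b * (a * (normSq (z 0) + normSq (z 1)) + b) := by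
  simp only [detEntries, if_true, if_false, zero_ne_one, re_add, re_smul, re_mul_conj_self, re_one,
    zero_smul, add_zero, normSq_smul, normSq_mul, normSq_conj]
  ring

end Octonion

open Octonion

lemma ptNormSq_nonneg (x : OPt) : 0 ≤ ptNormSq x := by
  unfold ptNormSq
  positivity

lemma ptNormSq_eq_normSq_add_normSq (x : OPt) :
    ptNormSq x = normSq (octPt x 0) + normSq (octPt x 1) := by
  rw [octPt, octPt, normSq_octOf, normSq_octOf, ptNormSq, Fin.sum_univ_two]

lemma octHess_eq_of_pd_pd {u : OPt → ℝ} {α β : Fin 2} {x : OPt} {a b : ℝ}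
    (h : ∀ q p, pd α q (fun y => pd β p u y) x =
      a * x α q * x β p + if α = β ∧ q = p then b else 0) :
    octHess u α β x = a • (octPt x α * conj (octPt x β)) + (if α = β then 8 * b else 0) • 1 := by
  simp_rw [octHess, h, add_smul, Finset.sum_add_distrib, octPt, octOf_mul_conj_octOf,
    Finset.smul_sum, smul_smul, mul_assoc]
  congr 1
  by_cases hαβ : α = β
  · simp only [hαβ, true_and, ite_smul, zero_smul, Finset.sum_ite_eq, Finset.mem_univ,
      if_true, basisE_mul_conj_self, Finset.sum_const, Finset.card_univ, Fintype.card_fin]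
    module
  · simp [hαβ]

def coordCLM (α : Fin 2) (p : Fin 8) : OPt →L[ℝ] ℝ :=
  ContinuousLinearMap.proj p ∘L ContinuousLinearMap.proj α

@[simp] lemma coordCLM_apply (α : Fin 2) (p : Fin 8) (y : OPt) : coordCLM α p y = y α p := rfl

lemma single_single_apply (α β : Fin 2) (q p : Fin 8) :
    (Pi.single α (Pi.single q 1) : OPt) β p = if α = β ∧ q = p then 1 else 0 := by
  by_cases h : α = β <;> simp [Pi.single_apply, h, eq_comm]

lemma sum_smul_coordCLM_apply_single (c : Fin 2 → Fin 8 → ℝ) (β : Fin 2) (q : Fin 8) :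
    (∑ α, ∑ p, c α p • coordCLM α p) (Pi.single β (Pi.single q 1)) = c β q := by
  fin_cases β <;> simp [Pi.single_apply, mul_ite]

lemma HasFDerivAt.pd_eq {u : OPt → ℝ} {u' : OPt →L[ℝ] ℝ} {x : OPt} (h : HasFDerivAt u u' x)
    (α : Fin 2) (p : Fin 8) : pd α p u x = u' (Pi.single α (Pi.single p 1)) := by
  rw [pd, h.fderiv]

lemma hasFDerivAt_ptNormSq (x : OPt) :
    HasFDerivAt ptNormSq (∑ α, ∑ p, (2 * x α p) • coordCLM α p) x := by
  have hsq (α : Fin 2) (p : Fin 8) :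
      HasFDerivAt (fun y : OPt => y α p ^ 2) ((2 * x α p) • coordCLM α p) x := by
    refine ((coordCLM α p).hasFDerivAt.pow 2).congr_fderiv ?_
    ext
    simp
  exact HasFDerivAt.fun_sum fun α _ => HasFDerivAt.fun_sum fun p _ => hsq α p

lemma pd_comp_ptNormSq {f : ℝ → ℝ} {d : ℝ} {x : OPt} (hf : HasDerivAt f d (ptNormSq x))
    (α : Fin 2) (p : Fin 8) : pd α p (fun y => f (ptNormSq y)) x = 2 * x α p * d := by
  have h : HasFDerivAt (fun y => f (ptNormSq y)) (d • ∑ α, ∑ p, (2 * x α p) • coordCLM α p) x :=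
    hf.comp_hasFDerivAt x (hasFDerivAt_ptNormSq x)
  rw [h.pd_eq, smul_apply, sum_smul_coordCLM_apply_single, smul_eq_mul, mul_comm]

section Radial

variable {f f' f'' : ℝ → ℝ}

lemma pd_pd_comp_ptNormSq (hf : ∀ t, 0 ≤ t → HasDerivAt f (f' t) t)
    (hf' : ∀ t, 0 ≤ t → HasDerivAt f' (f'' t) t) (α β : Fin 2) (q p : Fin 8) (x : OPt) :
    pd α q (fun y => pd β p (fun z => f (ptNormSq z)) y) x =
      4 * f'' (ptNormSq x) * x α q * x β p +
        if α = β ∧ q = p then 2 * f' (ptNormSq x) else 0 := by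
  have hfirst : (fun y => pd β p (fun z => f (ptNormSq z)) y) =
      fun y => 2 * y β p * f' (ptNormSq y) :=
    funext fun y => pd_comp_ptNormSq (hf _ (ptNormSq_nonneg y)) β p
  have hcoord : HasFDerivAt (fun y : OPt => 2 * y β p) ((2 : ℝ) • coordCLM β p) x :=
    (coordCLM β p).hasFDerivAt.const_mul 2
  have hradial : HasFDerivAt (fun y => f' (ptNormSq y))
      (f'' (ptNormSq x) • ∑ α, ∑ p, (2 * x α p) • coordCLM α p) x :=
    (hf' _ (ptNormSq_nonneg x)).comp_hasFDerivAt x (hasFDerivAt_ptNormSq x)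
  rw [hfirst, (hcoord.fun_mul hradial).pd_eq]
  simp only [add_apply, smul_apply, sum_smul_coordCLM_apply_single, coordCLM_apply,
    smul_eq_mul]
  rw [single_single_apply]
  split_ifs <;> ring

lemma octHess_comp_ptNormSq (hf : ∀ t, 0 ≤ t → HasDerivAt f (f' t) t)
    (hf' : ∀ t, 0 ≤ t → HasDerivAt f' (f'' t) t) (α β : Fin 2) (x : OPt) :
    octHess (fun y => f (ptNormSq y)) α β x =
      (4 * f'' (ptNormSq x)) • (octPt x α * conj (octPt x β)) +
        (if α = β then 16 * f' (ptNormSq x) else 0) • 1 := by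
  rw [octHess_eq_of_pd_pd (pd_pd_comp_ptNormSq hf hf' α β · · x)]
  congr 2
  split_ifs <;> ring

end Radial

lemma hasDerivAt_inv_pow_add {ε t : ℝ} (n : ℕ) (h : t + ε ≠ 0) :
    HasDerivAt (fun s => ((s + ε) ^ n)⁻¹) (-n * ((t + ε) ^ (n + 1))⁻¹) t := by
  refine ((((hasDerivAt_id' t).add_const ε).fun_pow n).fun_inv (pow_ne_zero n h)).congr_deriv ?_
  rcases n with _ | n
  · simp
  · simp only [Nat.add_sub_cancel]
    field_simp
    ring

lemma octHess_neg_inv_cube {ε : ℝ} (hε : 0 < ε) (α β : Fin 2) (x : OPt) :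
    octHess (fun y => -((ptNormSq y + ε) ^ 3)⁻¹) α β x =
      (-48 * ((ptNormSq x + ε) ^ 5)⁻¹) • (octPt x α * conj (octPt x β)) +
        (if α = β then 48 * ((ptNormSq x + ε) ^ 4)⁻¹ else 0) • 1 := by
  have hne (t : ℝ) (ht : 0 ≤ t) : t + ε ≠ 0 := by positivity
  have hf (t : ℝ) (ht : 0 ≤ t) :
      HasDerivAt (fun s => -((s + ε) ^ 3)⁻¹) (3 * ((t + ε) ^ 4)⁻¹) t := by
    refine (hasDerivAt_inv_pow_add 3 (hne t ht)).fun_neg.congr_deriv ?_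
    push_cast
    ring
  have hf' (t : ℝ) (ht : 0 ≤ t) :
      HasDerivAt (fun s => 3 * ((s + ε) ^ 4)⁻¹) (-12 * ((t + ε) ^ 5)⁻¹) t := by
    refine ((hasDerivAt_inv_pow_add 4 (hne t ht)).const_mul 3).congr_deriv ?_
    push_cast
    ring
  rw [octHess_comp_ptNormSq hf hf']
  congr 2
  · ring
  · split_ifs <;> ring

open Octonion in
/-- For `K_ε(x) = -(|x|²+ε)⁻³` on `O² ≅ ℝ¹⁶` with `ε > 0`, the octonionic
Hessian has entries `conj∂_α ∂_β K_ε = -48(|x|²+ε)⁻⁵ x_α conj(x_β) + 48 δ_{αβ}(|x|²+ε)⁻⁴`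
and determinant `det(Hess_O(K_ε)) = 48² ε/(|x|²+ε)⁹ > 0`. -/
theorem octHess_fundamental_solution (ε : ℝ) (hε : 0 < ε) (x : OPt) :
    (∀ α β : Fin 2,
      octHess (fun y => -((ptNormSq y + ε) ^ 3)⁻¹) α β x =
        (-48 * ((ptNormSq x + ε) ^ 5)⁻¹) • (octPt x α * conj (octPt x β)) +
          (if α = β then 48 * ((ptNormSq x + ε) ^ 4)⁻¹ else 0) • (1 : Octonion)) ∧
    detEntries (fun α β => octHess (fun y => -((ptNormSq y + ε) ^ 3)⁻¹) α β x) =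
      48 ^ 2 * ε * ((ptNormSq x + ε) ^ 9)⁻¹ ∧
    0 < 48 ^ 2 * ε * ((ptNormSq x + ε) ^ 9)⁻¹ := by
  have hK := octHess_neg_inv_cube hε
  have ht : 0 < ptNormSq x + ε := by linarith [ptNormSq_nonneg x]
  refine ⟨fun α β => hK α β x, ?_, by positivity⟩
  simp_rw [hK]
  rw [detEntries_smul_mul_conj_add, ← ptNormSq_eq_normSq_add_normSq]
  field_simp
  ring
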